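/- For all x > 0, 1 − √π·x·H(x) ≤ min{ 1/(2x²), 1/(√π·x) }, where H(x) = e^{x²}·erfc(x) is the Mill's ratio. -/

import Mathlib

/-!
Gordon's inequality `x / (1 + 2x²) ≤ e^{x²} ∫_x^∞ e^{-r²} dr` gives
`1 - √π x H(x) ≤ 1 / (1 + 2x²)` for `x ≥ 0`, which is at most both `1 / (2x²)` and
`1 / (√π x)`, the latter because `1 + 2x² - √π x = 2 (x - √π/4)² + 1 - π/8` and `π < 8`.
Gordon's inequality follows by integrating over `(x, ∞)` the derivative
`e^{-r²} (1 - 2 / (1 + 2r²)²) ≤ e^{-r²}` of `-e^{-r²} r / (1 + 2r²)`.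
-/

open Real MeasureTheory Set

noncomputable def erfc (z : ℝ) : ℝ :=
  (2 / Real.sqrt π) * ∫ r in Set.Ioi z, Real.exp (-r ^ 2)

noncomputable def MillsRatio (x : ℝ) : ℝ := Real.exp (x ^ 2) * erfc x

open Filter Topology

lemma integrableOn_exp_neg_sq_Ioi (x : ℝ) :
    IntegrableOn (fun r : ℝ => exp (-r ^ 2)) (Ioi x) := by
  simpa using (integrable_exp_neg_mul_sq one_pos).integrableOn (s := Ioi x)

lemma hasDerivAt_neg_exp_neg_sq_mul_div (r : ℝ) :
    HasDerivAt (fun r : ℝ => -(exp (-r ^ 2) * r / (1 + 2 * r ^ 2)))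
      (exp (-r ^ 2) * (1 - 2 / (1 + 2 * r ^ 2) ^ 2)) r := by
  have hpos : 0 < 1 + 2 * r ^ 2 := by positivity
  have h := ((((hasDerivAt_pow 2 r).fun_neg.exp).fun_mul (hasDerivAt_id' r)).fun_div
    (((hasDerivAt_pow 2 r).const_mul 2).const_add 1) hpos.ne').fun_neg
  refine h.congr_deriv ?_
  field_simp
  norm_num
  ring

lemma tendsto_exp_neg_sq_mul_div_atTop :
    Tendsto (fun r : ℝ => exp (-r ^ 2) * r / (1 + 2 * r ^ 2)) atTop (𝓝 0) := by
  have hexp : Tendsto (fun r : ℝ => exp (-r ^ 2)) atTop (𝓝 0) :=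
    tendsto_exp_atBot.comp (tendsto_neg_atTop_atBot.comp (tendsto_pow_atTop two_ne_zero))
  have hbdd : ∀ r : ℝ, |r / (1 + 2 * r ^ 2)| ≤ 1 := fun r => by
    rw [abs_div, abs_of_pos (by positivity : (0 : ℝ) < 1 + 2 * r ^ 2), div_le_one (by positivity)]
    nlinarith [abs_nonneg r, sq_abs r]
  simp_rw [mul_div_assoc]
  exact hexp.zero_mul_isBoundedUnder_le ⟨1, eventually_map.2 (Eventually.of_forall hbdd)⟩

lemma exp_neg_sq_mul_div_le_integral_Ioi (x : ℝ) :
    exp (-x ^ 2) * x / (1 + 2 * x ^ 2) ≤ ∫ r in Ioi x, exp (-r ^ 2) := by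
  set g : ℝ → ℝ := fun r => exp (-r ^ 2) * (1 - 2 / (1 + 2 * r ^ 2) ^ 2)
  have hg_le : ∀ r, |g r| ≤ exp (-r ^ 2) := fun r => by
    have h0 : 0 ≤ 2 / (1 + 2 * r ^ 2) ^ 2 := by positivity
    have h2 : 2 / (1 + 2 * r ^ 2) ^ 2 ≤ 2 := div_le_self zero_le_two (one_le_pow₀ (by nlinarith))
    rw [abs_mul, abs_of_pos (exp_pos _)]
    exact mul_le_of_le_one_right (exp_pos _).le (abs_le.2 ⟨by linarith, by linarith⟩)
  have hg_int : IntegrableOn g (Ioi x) :=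
    (integrableOn_exp_neg_sq_Ioi x).mono' (by fun_prop) (Eventually.of_forall hg_le)
  have hFTC := integral_Ioi_of_hasDerivAt_of_tendsto'
    (fun r _ => hasDerivAt_neg_exp_neg_sq_mul_div r) hg_int
    (by simpa using tendsto_exp_neg_sq_mul_div_atTop.neg)
  calc exp (-x ^ 2) * x / (1 + 2 * x ^ 2) = ∫ r in Ioi x, g r := by rw [hFTC]; ring
    _ ≤ ∫ r in Ioi x, exp (-r ^ 2) :=
      setIntegral_mono hg_int (integrableOn_exp_neg_sq_Ioi x)
        fun r => (le_abs_self _).trans (hg_le r)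

lemma one_sub_sqrt_pi_mul_millsRatio_le {x : ℝ} (hx : 0 ≤ x) :
    1 - √π * x * MillsRatio x ≤ 1 / (1 + 2 * x ^ 2) := by
  have hmills : √π * x * MillsRatio x = 2 * x * exp (x ^ 2) * ∫ r in Ioi x, exp (-r ^ 2) := by
    have : √π ≠ 0 := (sqrt_pos.2 pi_pos).ne'
    simp only [MillsRatio, erfc]
    field_simp
  have hgordon := mul_le_mul_of_nonneg_left (exp_neg_sq_mul_div_le_integral_Ioi x)
    (by positivity : 0 ≤ 2 * x * exp (x ^ 2))
  have hcancel : exp (x ^ 2) * exp (-x ^ 2) = 1 := by rw [← exp_add, add_neg_cancel, exp_zero]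
  have hlower : 2 * x * exp (x ^ 2) * (exp (-x ^ 2) * x / (1 + 2 * x ^ 2)) =
      1 - 1 / (1 + 2 * x ^ 2) := by
    field_simp
    linear_combination (2 * x ^ 2) * hcancel
  linarith

lemma sqrt_pi_mul_le_one_add_two_mul_sq (x : ℝ) : √π * x ≤ 1 + 2 * x ^ 2 := by
  nlinarith [sq_nonneg (x - √π / 4), sq_sqrt pi_pos.le, pi_le_four]

/-- For all `x > 0`, `1 − √π·x·H(x) ≤ min{1/(2x²), 1/(√π·x)}`. -/
theorem one_sub_millsRatio_bound (x : ℝ) (hx : 0 < x) :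
    1 - Real.sqrt π * x * MillsRatio x ≤
      min (1 / (2 * x ^ 2)) (1 / (Real.sqrt π * x)) := by
  refine le_min ?_ ?_ <;> refine (one_sub_sqrt_pi_mul_millsRatio_le hx.le).trans ?_
  · exact one_div_le_one_div_of_le (by positivity) (by linarith)
  · exact one_div_le_one_div_of_le (by positivity) (sqrt_pi_mul_le_one_add_two_mul_sq x)
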